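/- arXiv:2412.20178 — 6 statements merged into one kernel-verified Lean document; each statement's English description precedes it below -/
import Mathlib

section
/- Let n ≥ 1 and let (P, ≤) be a poset with a least element such that every strictly ascending chain in P has at most n elements, and such that for all w, u, v ∈ P with w ≤ u and w ≤ v there exists z ∈ P with w ≤ z and end(z) = end(u) ∪ end(v). Then P has at most n maximal elements. -/
/-- Formulas of intuitionistic propositional logic, built from propositional
variables `p_0, p_1, …` (indexed by `ℕ`) and `⊥` using `∧`, `∨`, `→`. -/
inductive Form : Type
  | var : ℕ → Form
  | bot : Form
  | and : Form → Form → Form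
  | or : Form → Form → Form
  | imp : Form → Form → Form
  deriving DecidableEq

namespace Form

/-- `¬α` abbreviates `α → ⊥`. -/
def neg (φ : Form) : Form := φ.imp .bot

/-- `⊤` abbreviates `⊥ → ⊥`. -/
def top : Form := Form.bot.imp .bot

/-- The set of propositional variables occurring in a formula. -/
def vars : Form → Set ℕ
  | var p => {p}
  | bot => ∅
  | and φ ψ => φ.vars ∪ ψ.vars
  | or φ ψ => φ.vars ∪ ψ.vars
  | imp φ ψ => φ.vars ∪ ψ.vars

/-- Uniform substitution, extended homomorphically to all formulas. -/
def subst (σ : ℕ → Form) : Form → Form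
  | var p => σ p
  | bot => bot
  | and φ ψ => (φ.subst σ).and (ψ.subst σ)
  | or φ ψ => (φ.subst σ).or (ψ.subst σ)
  | imp φ ψ => (φ.subst σ).imp (ψ.subst σ)

end Form

/-- A valuation `V` on a poset is intuitionistic when every `V p` is upward closed. -/
def IsVal {P : Type} [PartialOrder P] (V : ℕ → Set P) : Prop :=
  ∀ p, ∀ x y : P, x ≤ y → x ∈ V p → y ∈ V p

/-- The standard Kripke forcing relation for intuitionistic propositional logic. -/
def forces {P : Type} [PartialOrder P] (V : ℕ → Set P) : P → Form → Prop
  | w, .var p => w ∈ V p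
  | _, .bot => False
  | w, .and φ ψ => forces V w φ ∧ forces V w ψ
  | w, .or φ ψ => forces V w φ ∨ forces V w ψ
  | w, .imp φ ψ => ∀ v, w ≤ v → forces V v φ → forces V v ψ

/-- A point `w` of a poset validates `φ` if `φ` is forced at `w` under every
intuitionistic valuation. -/
def valid {P : Type} [PartialOrder P] (w : P) (φ : Form) : Prop :=
  ∀ V : ℕ → Set P, IsVal V → forces V w φ

/-- Semantic consequence at a point: `Γ ⊨_{P,w} φ`. -/
def Conseq {P : Type} [PartialOrder P] (Γ : Set Form) (w : P) (φ : Form) : Prop :=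
  ∀ V : ℕ → Set P, IsVal V → (∀ γ ∈ Γ, forces V w γ) → forces V w φ

/-- The n-Medvedev frame: nonempty subsets of `{0,…,n−1}`. -/
def Med (n : ℕ) : Type := {X : Finset (Fin n) // X.Nonempty}

/-- The order on the n-Medvedev frame is reverse inclusion `⊇`. -/
instance (n : ℕ) : PartialOrder (Med n) where
  le X Y := Y.1 ⊆ X.1
  le_refl X := Finset.Subset.refl _
  le_trans X Y Z h1 h2 := Finset.Subset.trans h2 h1
  le_antisymm X Y h1 h2 := Subtype.ext (Finset.Subset.antisymm h2 h1)

instance (n : ℕ) : Fintype (Med n) :=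
  inferInstanceAs (Fintype {X : Finset (Fin n) // X.Nonempty})

/-- The root (least element) of the n-Medvedev frame: the full set `{0,…,n−1}`. -/
def root (n : ℕ) (hn : 1 ≤ n) : Med n := ⟨Finset.univ, ⟨⟨0, hn⟩, Finset.mem_univ _⟩⟩

/-- `endSet w` is the set of end points (maximal elements) above `w`. -/
def endSet {P : Type} [PartialOrder P] (w : P) : Set P := {e | IsMax e ∧ w ≤ e}

/-- Finite disjunction `⋁_{i} F i` (the empty disjunction is `⊥`). -/
def bigDisj (n : ℕ) (F : Fin n → Form) : Form :=
  (List.finRange n).foldr (fun i acc => (F i).or acc) .bot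

/-- `λ_i = p_i ∧ ⋀_{j ≠ i} ¬ p_j`, for a choice `p : Fin n → ℕ` of variables. -/
def lam (n : ℕ) (p : Fin n → ℕ) (i : Fin n) : Form :=
  (Form.var (p i)).and
    (((List.finRange n).filter (fun j => j ≠ i)).foldr
      (fun j acc => ((Form.var (p j)).neg).and acc) Form.top)

/-- A Hilbert-style axiomatization of intuitionistic propositional logic. -/
inductive IPC : Form → Prop
  | ax1 (φ ψ : Form) : IPC (φ.imp (ψ.imp φ))
  | ax2 (φ ψ χ : Form) : IPC ((φ.imp (ψ.imp χ)).imp ((φ.imp ψ).imp (φ.imp χ)))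
  | andI (φ ψ : Form) : IPC (φ.imp (ψ.imp (φ.and ψ)))
  | andE1 (φ ψ : Form) : IPC ((φ.and ψ).imp φ)
  | andE2 (φ ψ : Form) : IPC ((φ.and ψ).imp ψ)
  | orI1 (φ ψ : Form) : IPC (φ.imp (φ.or ψ))
  | orI2 (φ ψ : Form) : IPC (ψ.imp (φ.or ψ))
  | orE (φ ψ χ : Form) : IPC ((φ.imp χ).imp ((ψ.imp χ).imp ((φ.or ψ).imp χ)))
  | botE (φ : Form) : IPC (Form.bot.imp φ)
  | mp {φ ψ : Form} : IPC (φ.imp ψ) → IPC φ → IPC ψ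

/-- The Kreisel–Putnam formula `(¬p → q ∨ r) → ((¬p → q) ∨ (¬p → r))`. -/
def kpForm : Form :=
  ((Form.var 0).neg.imp ((Form.var 1).or (Form.var 2))).imp
    (((Form.var 0).neg.imp (Form.var 1)).or ((Form.var 0).neg.imp (Form.var 2)))

/-- The bounded-depth formulas: `bd_1 = p_1 ∨ (p_1 → ⊥)`,
`bd_{k+1} = p_{k+1} ∨ (p_{k+1} → bd_k)`. -/
def bd : ℕ → Form
  | 0 => .bot
  | k + 1 => (Form.var (k + 1)).or ((Form.var (k + 1)).imp (bd k))

/-- `ML_n`: the smallest set of formulas containing all theorems of intuitionistic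
propositional logic and all substitution instances of `kp` and `bd_n`, closed under
modus ponens, uniform substitution, and the Gabbay-style rule `Ed_n`. -/
inductive MLn (n : ℕ) : Form → Prop
  | ipc {φ : Form} : IPC φ → MLn n φ
  | kp : MLn n kpForm
  | bdn : MLn n (bd n)
  | mp {φ ψ : Form} : MLn n (φ.imp ψ) → MLn n φ → MLn n ψ
  | subst {φ : Form} (σ : ℕ → Form) : MLn n φ → MLn n (φ.subst σ)
  | ed {α β : Form} (p : Fin n → ℕ) : Function.Injective p →
      (∀ i, p i ∉ α.vars ∧ p i ∉ β.vars) →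
      MLn n (α.imp (β.or (bigDisj n fun i => (lam n p i).neg))) →
      MLn n (α.imp β)

/-- `Γ ⊢_n φ`: there are finitely many `γ_1, …, γ_k ∈ Γ` with
`(γ_1 ∧ … ∧ γ_k) → φ ∈ ML_n`. -/
def Proves (n : ℕ) (Γ : Set Form) (φ : Form) : Prop :=
  ∃ l : List Form, (∀ γ ∈ l, γ ∈ Γ) ∧ MLn n ((l.foldr Form.and Form.top).imp φ)

/-- Disjunction `⋁_{i ∈ I} F i` over a finite set of indices. -/
def disjOver {n : ℕ} (I : Finset (Fin n)) (F : Fin n → Form) : Form :=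
  ((List.finRange n).filter (fun i => i ∈ I)).foldr (fun i acc => (F i).or acc) .bot

/-- `α_I = ¬¬ ⋁_{i ∈ I} α_i`. -/
def alphaI {n : ℕ} (I : Finset (Fin n)) (α : Fin n → Form) : Form :=
  ((disjOver I α).neg).neg

open Classical in
/-- `α_S = ⋁_{I ∈ S} α_I` for a set `S` of points of the n-Medvedev frame
(with `α_∅ = ⊥`). -/
noncomputable def alphaS {n : ℕ} (S : Set (Med n)) (α : Fin n → Form) : Form :=
  ((Finset.univ : Finset (Med n)).filter (fun I => I ∈ S)).toList.foldr
    (fun I acc => (alphaI I.1 α).or acc) .bot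

lemma endSet_of_isMax {P : Type} [PartialOrder P] {e : P} (he : IsMax e) :
    endSet e = {e} := by
  ext x
  constructor
  · rintro ⟨hx, hle⟩
    exact le_antisymm (he hle) hle
  · rintro rfl
    exact ⟨he, le_refl _⟩

lemma lemB {P : Type} [PartialOrder P] (n : ℕ) (g : Fin (n + 1) → P)
    (hg : ∀ i, IsMax (g i))
    (huni : ∀ w u v : P, w ≤ u → w ≤ v →
      ∃ z : P, w ≤ z ∧ endSet z = endSet u ∪ endSet v) :
    ∀ m : ℕ, ∀ w : P, (∀ i : Fin (n + 1), (i : ℕ) ≤ m → w ≤ g i) →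
      ∃ z : P, w ≤ z ∧ endSet z = {x | ∃ i : Fin (n + 1), (i : ℕ) ≤ m ∧ x = g i} := by
  intro m
  induction m with
  | zero =>
    intro w hw
    refine ⟨g ⟨0, by omega⟩, hw _ (by simp), ?_⟩
    rw [endSet_of_isMax (hg _)]
    ext x
    constructor
    · rintro rfl
      exact ⟨⟨0, by omega⟩, by simp, rfl⟩
    · rintro ⟨i, hi, rfl⟩
      have : i = ⟨0, by omega⟩ := by
        apply Fin.ext; simpa using hi
      rw [this]; rfl
  | succ m ih =>
    intro w hw
    obtain ⟨z', hwz', hz'⟩ := ih w (fun i hi => hw i (by omega))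
    by_cases hmn : m + 1 ≤ n
    · set i1 : Fin (n + 1) := ⟨m + 1, by omega⟩ with hi1
      obtain ⟨z, hwz, hz⟩ := huni w (g i1) z' (hw i1 (by simp [hi1])) hwz'
      refine ⟨z, hwz, ?_⟩
      rw [hz, hz', endSet_of_isMax (hg i1)]
      ext x
      constructor
      · rintro (rfl | ⟨i, hi, rfl⟩)
        · exact ⟨i1, by simp [hi1], rfl⟩
        · exact ⟨i, by omega, rfl⟩
      · rintro ⟨i, hi, rfl⟩
        rcases Nat.lt_or_ge (i : ℕ) (m + 1) with h | h
        · exact Or.inr ⟨i, by omega, rfl⟩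
        · have : i = i1 := by apply Fin.ext; simp [hi1]; omega
          rw [this]; exact Or.inl rfl
    · refine ⟨z', hwz', ?_⟩
      rw [hz']
      ext x
      constructor
      · rintro ⟨i, hi, rfl⟩
        exact ⟨i, by omega, rfl⟩
      · rintro ⟨i, hi, rfl⟩
        exact ⟨i, by have := i.isLt; omega, rfl⟩

/-- A rooted poset satisfying (chain≤n) and (uni) has at most n
maximal elements. -/
theorem stmt1 (n : ℕ) (hn : 1 ≤ n) (P : Type) [PartialOrder P]
    (r : P) (hr : ∀ x : P, r ≤ x)
    (hchain : ∀ f : Fin (n + 1) → P, ¬ StrictMono f)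
    (huni : ∀ w u v : P, w ≤ u → w ≤ v →
      ∃ z : P, w ≤ z ∧ endSet z = endSet u ∪ endSet v) :
    ∀ g : Fin (n + 1) → P, (∀ i, IsMax (g i)) → ¬ Function.Injective g := by
  intro g hg hinj
  -- S j: ends g i with i + j ≤ n
  set S : ℕ → Set P := fun j => {x | ∃ i : Fin (n + 1), (i : ℕ) + j ≤ n ∧ x = g i} with hS
  have key : ∀ k : ℕ, k ≤ n → ∃ c : ℕ → P,
      (∀ j, j < k → c j < c (j + 1)) ∧ (∀ j, j ≤ k → endSet (c j) = S j) := by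
    intro k
    induction k with
    | zero =>
      intro _
      obtain ⟨z, _, hz⟩ := lemB n g hg huni n r (fun i _ => hr _)
      refine ⟨fun _ => z, fun j hj => by omega, ?_⟩
      intro j hj
      have hj0 : j = 0 := by omega
      subst hj0
      rw [hz]
      ext x
      constructor
      · rintro ⟨i, hi, rfl⟩; exact ⟨i, by omega, rfl⟩
      · rintro ⟨i, hi, rfl⟩; exact ⟨i, by omega, rfl⟩
    | succ k ihk =>
      intro hk1
      obtain ⟨c, hmono, hend⟩ := ihk (by omega)
      have hcw : ∀ i : Fin (n + 1), (i : ℕ) ≤ n - (k + 1) → c k ≤ g i := by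
        intro i hi
        have : g i ∈ endSet (c k) := by
          rw [hend k (le_refl _)]
          exact ⟨i, by omega, rfl⟩
        exact this.2
      obtain ⟨z, hcz, hz⟩ := lemB n g hg huni (n - (k + 1)) (c k) hcw
      have hzS : endSet z = S (k + 1) := by
        rw [hz]
        ext x
        constructor
        · rintro ⟨i, hi, rfl⟩; exact ⟨i, by omega, rfl⟩
        · rintro ⟨i, hi, rfl⟩; exact ⟨i, by omega, rfl⟩
      have hne : c k ≠ z := by
        intro h
        have hS1 : endSet (c k) = S k := hend k (le_refl _)
        have hSeq : S k = S (k + 1) := by rw [← hS1, h, hzS]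
        set i0 : Fin (n + 1) := ⟨n - k, by omega⟩ with hi0
        have h1 : g i0 ∈ S k := ⟨i0, by simp [hi0]; omega, rfl⟩
        rw [hSeq] at h1
        obtain ⟨i, hi, he⟩ := h1
        have : i = i0 := hinj he.symm
        subst this
        simp [hi0] at hi
        omega
      have hlt : c k < z := lt_of_le_of_ne hcz hne
      refine ⟨fun j => if j ≤ k then c j else z, ?_, ?_⟩
      · intro j hj
        rcases Nat.lt_or_ge j k with h | h
        · simp only [if_pos (by omega : j ≤ k), if_pos (by omega : j + 1 ≤ k)]
          exact hmono j h
        · have hjk : j = k := by omega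
          subst hjk
          simp only [if_pos (le_refl j), if_neg (by omega : ¬ j + 1 ≤ j)]
          exact hlt
      · intro j hj
        rcases Nat.lt_or_ge k j with h | h
        · have : j = k + 1 := by omega
          subst this
          simp only [if_neg (by omega : ¬ k + 1 ≤ k)]
          exact hzS
        · simp only [if_pos h]
          exact hend j h
  obtain ⟨c, hmono, _⟩ := key n (le_refl n)
  have hmono' : ∀ a b : ℕ, b ≤ n → a < b → c a < c b := by
    intro a b
    induction b with
    | zero => omega
    | succ b ihb =>
      intro hb hab
      rcases Nat.lt_or_ge a b with h | h
      · exact lt_trans (ihb (by omega) h) (hmono b (by omega))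
      · have : a = b := by omega
        subst this
        exact hmono a (by omega)
  exact hchain (fun i => c i)
    (fun i j hij => hmono' i j (by omega) (by exact_mod_cast hij))
end

section
/- Let n ≥ 1. For every formula φ ∈ ML_n, the root r = {0,…,n−1} of the n-Medvedev frame F_n validates φ, i.e., (F_n, V), r ⊨ φ for every intuitionistic valuation V on F_n. -/
section Soundness

variable {P : Type} [PartialOrder P]

theorem forces_mono {V : ℕ → Set P} (hV : IsVal V) :
    ∀ (φ : Form) {w v : P}, w ≤ v → forces V w φ → forces V v φ
  | .var p, w, v, h, hw => hV p w v h hw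
  | .bot, _, _, _, h => h
  | .and φ ψ, _, _, h, hw => ⟨forces_mono hV φ h hw.1, forces_mono hV ψ h hw.2⟩
  | .or φ ψ, _, _, h, hw => hw.imp (forces_mono hV φ h) (forces_mono hV ψ h)
  | .imp _ _, _, _, h, hw => fun u hu hφ => hw u (le_trans h hu) hφ

theorem forces_congr {V V' : ℕ → Set P} :
    ∀ (φ : Form), (∀ q ∈ φ.vars, V q = V' q) →
      ∀ w : P, forces V w φ ↔ forces V' w φ
  | .var p, h, w => by
      have : V p = V' p := h p (by simp [Form.vars])
      simp [forces, this]
  | .bot, _, w => Iff.rfl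
  | .and φ ψ, h, w => by
      have h1 := forces_congr φ (fun q hq => h q (Or.inl hq))
      have h2 := forces_congr ψ (fun q hq => h q (Or.inr hq))
      exact and_congr (h1 w) (h2 w)
  | .or φ ψ, h, w => by
      have h1 := forces_congr φ (fun q hq => h q (Or.inl hq))
      have h2 := forces_congr ψ (fun q hq => h q (Or.inr hq))
      exact or_congr (h1 w) (h2 w)
  | .imp φ ψ, h, w => by
      have h1 := forces_congr φ (fun q hq => h q (Or.inl hq))
      have h2 := forces_congr ψ (fun q hq => h q (Or.inr hq))
      exact forall_congr' fun v => imp_congr Iff.rfl (imp_congr (h1 v) (h2 v))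

theorem forces_subst {V : ℕ → Set P} (σ : ℕ → Form) :
    ∀ (φ : Form) (w : P),
      forces V w (φ.subst σ) ↔ forces (fun q => {x | forces V x (σ q)}) w φ
  | .var p, w => Iff.rfl
  | .bot, w => Iff.rfl
  | .and φ ψ, w => and_congr (forces_subst σ φ w) (forces_subst σ ψ w)
  | .or φ ψ, w => or_congr (forces_subst σ φ w) (forces_subst σ ψ w)
  | .imp φ ψ, w =>
      forall_congr' fun v => imp_congr Iff.rfl
        (imp_congr (forces_subst σ φ v) (forces_subst σ ψ v))

theorem ipc_sound {φ : Form} (h : IPC φ) :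
    ∀ {P : Type} [PartialOrder P] (V : ℕ → Set P), IsVal V → ∀ w : P, forces V w φ := by
  induction h with
  | ax1 φ ψ =>
      intro P _ V hV w
      intro v hv hφ u hu hψ
      exact forces_mono hV φ hu hφ
  | ax2 φ ψ χ =>
      intro P _ V hV w
      intro v1 h1 hA v2 h2 hB v3 h3 hφ
      exact hA v3 (le_trans h2 h3) hφ v3 le_rfl (hB v3 h3 hφ)
  | andI φ ψ =>
      intro P _ V hV w
      intro v1 h1 hφ v2 h2 hψ
      exact ⟨forces_mono hV φ h2 hφ, hψ⟩
  | andE1 φ ψ =>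
      intro P _ V hV w
      intro v1 h1 hφψ
      exact hφψ.1
  | andE2 φ ψ =>
      intro P _ V hV w
      intro v1 h1 hφψ
      exact hφψ.2
  | orI1 φ ψ =>
      intro P _ V hV w
      intro v1 h1 hφ
      exact Or.inl hφ
  | orI2 φ ψ =>
      intro P _ V hV w
      intro v1 h1 hψ
      exact Or.inr hψ
  | orE φ ψ χ =>
      intro P _ V hV w
      intro v1 h1 hA v2 h2 hB v3 h3 hor
      rcases hor with hφ | hψ
      · exact hA v3 (le_trans h2 h3) hφ
      · exact hB v3 h3 hψ
  | botE φ =>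
      intro P _ V hV w
      intro v1 h1 hb
      exact hb.elim
  | mp h1 h2 ih1 ih2 =>
      intro P _ V hV w
      exact ih1 V hV w w le_rfl (ih2 V hV w)

end Soundness

theorem med_le_def {n : ℕ} {X Y : Med n} : X ≤ Y ↔ Y.1 ⊆ X.1 := Iff.rfl

theorem kp_sound {n : ℕ} (V : ℕ → Set (Med n)) (hV : IsVal V) (w : Med n) :
    forces V w kpForm := by
  intro X hwX hX
  by_contra hc
  have h1 : ¬ forces V X ((Form.var 0).neg.imp (Form.var 1)) := fun h => hc (Or.inl h)
  have h2 : ¬ forces V X ((Form.var 0).neg.imp (Form.var 2)) := fun h => hc (Or.inr h)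
  simp only [forces, not_forall] at h1 h2
  obtain ⟨Y, hXY, hYn, hY1⟩ := h1
  obtain ⟨Z, hXZ, hZn, hZ2⟩ := h2
  have hYne := Y.2
  obtain ⟨y0, hy0⟩ := hYne
  set U : Med n := ⟨Y.1 ∪ Z.1, ⟨y0, Finset.mem_union_left _ hy0⟩⟩ with hU
  have hXU : X ≤ U := by
    rw [med_le_def]
    exact Finset.union_subset (med_le_def.mp hXY) (med_le_def.mp hXZ)
  have hUn : forces V U ((Form.var 0).neg) := by
    intro W hUW hW0
    obtain ⟨a, ha⟩ := W.2
    have haU : a ∈ Y.1 ∪ Z.1 := med_le_def.mp hUW ha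
    rcases Finset.mem_union.mp haU with haY | haZ
    · set W' : Med n := ⟨W.1 ∩ Y.1, ⟨a, Finset.mem_inter.mpr ⟨ha, haY⟩⟩⟩ with hW'
      have hWW' : W ≤ W' := med_le_def.mpr (Finset.inter_subset_left)
      have hW'0 : W' ∈ V 0 := hV 0 W W' hWW' hW0
      exact hYn W' (med_le_def.mpr Finset.inter_subset_right) hW'0
    · set W' : Med n := ⟨W.1 ∩ Z.1, ⟨a, Finset.mem_inter.mpr ⟨ha, haZ⟩⟩⟩ with hW'
      have hWW' : W ≤ W' := med_le_def.mpr (Finset.inter_subset_left)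
      have hW'0 : W' ∈ V 0 := hV 0 W W' hWW' hW0
      exact hZn W' (med_le_def.mpr Finset.inter_subset_right) hW'0
  rcases hX U hXU hUn with hq | hr
  · exact hY1 (hV 1 U Y (med_le_def.mpr Finset.subset_union_left) hq)
  · exact hZ2 (hV 2 U Z (med_le_def.mpr Finset.subset_union_right) hr)

theorem bd_sound {n : ℕ} (V : ℕ → Set (Med n)) (hV : IsVal V) :
    ∀ (k : ℕ) (X : Med n), X.1.card ≤ k → forces V X (bd k) := by
  intro k
  induction k with
  | zero =>
      intro X hX
      exact absurd (Finset.card_pos.mpr X.2) (by omega)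
  | succ k ih =>
      intro X hX
      by_cases hXk : X ∈ V (k + 1)
      · exact Or.inl hXk
      · refine Or.inr ?_
        intro Y hXY hY
        have hne : Y ≠ X := fun h => hXk (h ▸ hY)
        have hss : Y.1 ⊂ X.1 :=
          HasSubset.Subset.ssubset_of_ne (med_le_def.mp hXY)
            (fun h => hne (Subtype.ext h))
        have : Y.1.card < X.1.card := Finset.card_lt_card hss
        exact ih Y (by omega)

theorem forces_orList {P : Type} [PartialOrder P] {V : ℕ → Set P} {n : ℕ}
    (F : Fin n → Form) (w : P) :
    ∀ l : List (Fin n),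
      (forces V w (l.foldr (fun i acc => (F i).or acc) .bot) ↔
        ∃ i ∈ l, forces V w (F i))
  | [] => by simp [forces]
  | i :: l => by
      simp only [List.foldr_cons, List.mem_cons]
      constructor
      · rintro (h | h)
        · exact ⟨i, Or.inl rfl, h⟩
        · obtain ⟨j, hj, hjf⟩ := (forces_orList F w l).mp h
          exact ⟨j, Or.inr hj, hjf⟩
      · rintro ⟨j, hj | hj, hjf⟩
        · exact Or.inl (hj ▸ hjf)
        · exact Or.inr ((forces_orList F w l).mpr ⟨j, hj, hjf⟩)

theorem forces_bigDisj {P : Type} [PartialOrder P] {V : ℕ → Set P} {n : ℕ}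
    (F : Fin n → Form) (w : P) :
    forces V w (bigDisj n F) ↔ ∃ i, forces V w (F i) := by
  rw [bigDisj, forces_orList]
  simp [List.mem_finRange]

theorem forces_andList {P : Type} [PartialOrder P] {V : ℕ → Set P} {n : ℕ}
    (G : Fin n → Form) (w : P) :
    ∀ l : List (Fin n),
      (forces V w (l.foldr (fun i acc => (G i).and acc) Form.top) ↔
        ∀ i ∈ l, forces V w (G i))
  | [] => by
      simp only [List.foldr_nil, List.not_mem_nil]
      exact ⟨fun _ i h => h.elim, fun _ => fun v _ hb => hb⟩
  | i :: l => by
      simp only [List.foldr_cons, List.mem_cons]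
      constructor
      · rintro ⟨h1, h2⟩ j (rfl | hj)
        · exact h1
        · exact (forces_andList G w l).mp h2 j hj
      · intro h
        exact ⟨h i (Or.inl rfl), (forces_andList G w l).mpr fun j hj => h j (Or.inr hj)⟩

theorem forces_lam {n : ℕ} {V : ℕ → Set (Med n)} (p : Fin n → ℕ) (i : Fin n)
    (w : Med n) :
    forces V w (lam n p i) ↔
      w ∈ V (p i) ∧
        ∀ j, j ≠ i → forces V w ((Form.var (p j)).neg) := by
  rw [lam]
  show (w ∈ V (p i) ∧ _) ↔ _
  refine and_congr Iff.rfl ?_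
  rw [forces_andList (fun j => (Form.var (p j)).neg)]
  constructor
  · intro h j hj
    exact h j (by simp [List.mem_filter, hj])
  · intro h j hj
    simp only [List.mem_filter, decide_eq_true_eq] at hj
    exact h j hj.2

def medMap (n : ℕ) (g : Fin n → Fin n) (X : Med n) : Med n :=
  ⟨X.1.image g, X.2.image g⟩

theorem medMap_mono {n : ℕ} (g : Fin n → Fin n) {X Y : Med n} (h : X ≤ Y) :
    medMap n g X ≤ medMap n g Y :=
  med_le_def.mpr (Finset.image_subset_image (med_le_def.mp h))

theorem forces_pullback {n : ℕ} (g : Fin n → Fin n) (V : ℕ → Set (Med n)) :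
    ∀ (φ : Form) (X : Med n),
      forces (fun q => {Z | medMap n g Z ∈ V q}) X φ ↔ forces V (medMap n g X) φ
  | .var p, X => Iff.rfl
  | .bot, X => Iff.rfl
  | .and φ ψ, X => and_congr (forces_pullback g V φ X) (forces_pullback g V ψ X)
  | .or φ ψ, X => or_congr (forces_pullback g V φ X) (forces_pullback g V ψ X)
  | .imp φ ψ, X => by
      constructor
      · intro h W hW hWφ
        obtain ⟨a, ha⟩ := W.2
        have haX : a ∈ (medMap n g X).1 := med_le_def.mp hW ha
        obtain ⟨b, hbX, hgb⟩ := Finset.mem_image.mp haX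
        set X' : Med n := ⟨X.1.filter (fun c => g c ∈ W.1),
          ⟨b, Finset.mem_filter.mpr ⟨hbX, by rw [hgb]; exact ha⟩⟩⟩ with hX'
        have hfX' : medMap n g X' = W := by
          apply Subtype.ext
          apply Finset.ext
          intro x
          simp only [medMap, hX', Finset.mem_image, Finset.mem_filter]
          constructor
          · rintro ⟨c, ⟨hcX, hcW⟩, rfl⟩
            exact hcW
          · intro hx
            have hxM : x ∈ (medMap n g X).1 := med_le_def.mp hW hx
            obtain ⟨c, hcX, rfl⟩ := Finset.mem_image.mp hxM
            exact ⟨c, ⟨hcX, hx⟩, rfl⟩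
        have hX'φ : forces (fun q => {Z | medMap n g Z ∈ V q}) X' φ :=
          (forces_pullback g V φ X').mpr (by rw [hfX']; exact hWφ)
        have := h X' (med_le_def.mpr (Finset.filter_subset _ _)) hX'φ
        have := (forces_pullback g V ψ X').mp this
        rwa [hfX'] at this
      · intro h X' hX' hφ
        exact (forces_pullback g V ψ X').mpr
          (h (medMap n g X') (medMap_mono g hX')
            ((forces_pullback g V φ X').mp hφ))
/-- Soundness of ML_n: every theorem of ML_n is validated at the
root of the n-Medvedev frame. -/
theorem stmt8 (n : ℕ) (hn : 1 ≤ n) (φ : Form) (h : MLn n φ) :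
    valid (root n hn) φ := by
  induction h with
  | ipc h =>
      intro V hV
      exact ipc_sound h V hV _
  | kp =>
      intro V hV
      exact kp_sound V hV _
  | bdn =>
      intro V hV
      exact bd_sound V hV n _ (by simp [root])
  | mp h1 h2 ih1 ih2 =>
      intro V hV
      exact ih1 V hV _ le_rfl (ih2 V hV)
  | subst σ h ih =>
      intro V hV
      rw [forces_subst]
      exact ih _ (fun q x y hxy hx => forces_mono hV (σ q) hxy hx)
  | ed p hinj hfresh h ih =>
      rename_i α β
      intro V hV
      intro Y hY hYα
      by_contra hYβ
      classical
      obtain ⟨y0, hy0⟩ := Y.2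
      set g : Fin n → Fin n := fun a => if a ∈ Y.1 then a else y0 with hg
      have hfroot : medMap n g (root n hn) = Y := by
        apply Subtype.ext
        apply Finset.ext
        intro x
        simp only [medMap, root, Finset.mem_image, Finset.mem_univ, true_and]
        constructor
        · rintro ⟨a, rfl⟩
          by_cases ha : a ∈ Y.1 <;> simp [g, ha, hy0]
        · intro hx
          exact ⟨x, by simp [g, hx]⟩
      set V1 : ℕ → Set (Med n) := fun q => {Z | medMap n g Z ∈ V q} with hV1def
      have hV1 : IsVal V1 := fun q x y hxy hx =>
        hV q _ _ (medMap_mono g hxy) hx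
      have h1α : forces V1 (root n hn) α := by
        rw [forces_pullback, hfroot]; exact hYα
      have h1β : ¬ forces V1 (root n hn) β := by
        rw [forces_pullback, hfroot]; exact hYβ
      set V2 : ℕ → Set (Med n) := fun q =>
        if q ∈ Set.range p then {Z : Med n | ∃ i, p i = q ∧ Z.1 = {i}} else V1 q
        with hV2def
      have hV2 : IsVal V2 := by
        intro q x y hxy hx
        by_cases hq : q ∈ Set.range p
        · simp only [hV2def, hq, if_pos] at hx ⊢
          obtain ⟨i, hpi, hxi⟩ := hx
          refine ⟨i, hpi, ?_⟩
          have hsub : y.1 ⊆ ({i} : Finset (Fin n)) := hxi ▸ med_le_def.mp hxy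
          rcases Finset.subset_singleton_iff.mp hsub with h0 | h0
          · exact absurd h0 (Finset.nonempty_iff_ne_empty.mp y.2)
          · exact h0
        · simp only [hV2def, hq, if_neg, not_false_iff] at hx ⊢
          exact hV1 q x y hxy hx
      have hagree : ∀ γ : Form, (∀ i, p i ∉ γ.vars) →
          ∀ w, (forces V2 w γ ↔ forces V1 w γ) := by
        intro γ hγ w
        refine forces_congr γ (fun q hq => ?_) w
        have hq' : q ∉ Set.range p := by
          rintro ⟨i, rfl⟩
          exact hγ i hq
        simp only [hV2def]
        rw [if_neg hq']
      have h2α : forces V2 (root n hn) α :=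
        (hagree α (fun i => (hfresh i).1) _).mpr h1α
      have h2 := ih V2 hV2 _ le_rfl h2α
      rcases h2 with h2β | h2D
      · exact h1β ((hagree β (fun i => (hfresh i).2) _).mp h2β)
      · rw [forces_bigDisj] at h2D
        obtain ⟨i, hi⟩ := h2D
        set Zi : Med n := ⟨{i}, Finset.singleton_nonempty i⟩ with hZi
        refine hi Zi (med_le_def.mpr (Finset.subset_univ _)) ?_
        rw [forces_lam]
        constructor
        · show Zi ∈ V2 (p i)
          have hset : V2 (p i) = {Z : Med n | ∃ k, p k = p i ∧ Z.1 = {k}} := by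
            simp only [hV2def]
            exact if_pos ⟨i, rfl⟩
          rw [hset]
          exact ⟨i, rfl, rfl⟩
        · intro j hj W hZW hW
          have hWj : W ∈ V2 (p j) := hW
          have hset : V2 (p j) = {Z : Med n | ∃ k, p k = p j ∧ Z.1 = {k}} := by
            simp only [hV2def]
            exact if_pos ⟨j, rfl⟩
          rw [hset] at hWj
          obtain ⟨k, hpk, hWk⟩ := hWj
          have hkj : k = j := hinj hpk
          subst hkj
          have hsub : ({k} : Finset (Fin n)) ⊆ {i} := hWk ▸ med_le_def.mp hZW
          have : k = i := Finset.singleton_subset_iff.mp hsub |> Finset.mem_singleton.mp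
          exact hj this
end

section
/- Let n ≥ 1, Γ a set of formulas, φ a formula, and p_1,…,p_n distinct propositional variables occurring in no formula of Γ ∪ {φ}. If Γ ⊢_n φ ∨ ⋁_{i=1}^n ¬λ_i, where λ_i = p_i ∧ ⋀_{1≤j≤n, j≠i} ¬p_j, then Γ ⊢_n φ. -/
/-- If `p_1,…,p_n` are distinct variables fresh for `Γ ∪ {φ}` and
`Γ ⊢_n φ ∨ ⋁_i ¬λ_i`, then `Γ ⊢_n φ`. -/
theorem stmt9 (n : ℕ) (hn : 1 ≤ n) (Γ : Set Form) (φ : Form)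
    (p : Fin n → ℕ) (hinj : Function.Injective p)
    (hfresh : ∀ i, (∀ γ ∈ Γ, p i ∉ γ.vars) ∧ p i ∉ φ.vars)
    (h : Proves n Γ (φ.or (bigDisj n fun i => (lam n p i).neg))) :
    Proves n Γ φ := by
  obtain ⟨l, hl, hml⟩ := h
  have key : ∀ i, p i ∉ (l.foldr Form.and Form.top).vars := by
    clear hml
    intro i
    induction l with
    | nil => simp [Form.vars, Form.top]
    | cons a t ih =>
      simp only [List.foldr, Form.vars, Set.mem_union]
      push_neg
      exact ⟨(hfresh i).1 a (hl a (by simp)),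
        ih (fun γ hγ => hl γ (List.mem_cons_of_mem _ hγ))⟩
  exact ⟨l, hl, MLn.ed p hinj (fun i => ⟨key i, (hfresh i).2⟩) hml⟩
end

section
/- Let Γ = {bd_i → p_0 : i ≥ 1}, where the formulas bd_i are built from the variables p_1,…,p_i (so p_0 occurs in no bd_i). Then Γ ⊨_C p_0, where C is the class of all Medvedev frames {F_n : n ≥ 1}; but for every finite subset Γ' of Γ, Γ' ⊭_C p_0. Hence the semantic consequence relation of Medvedev's logic is not compact. -/
lemma bd_forced_of_card_le {n : ℕ} (V : ℕ → Set (Med n)) (hV : IsVal V) :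
    ∀ (k : ℕ) (w : Med n), w.1.card ≤ k → forces V w (bd k) := by
  intro k
  induction k with
  | zero =>
    intro w hw
    have := Finset.card_pos.mpr w.2
    omega
  | succ k ih =>
    intro w hw
    by_cases hmem : w ∈ V (k + 1)
    · exact Or.inl hmem
    · refine Or.inr ?_
      intro v hv hvp
      have hne : v ≠ w := by rintro rfl; exact hmem hvp
      have hsub : v.1 ⊂ w.1 :=
        Finset.ssubset_iff_subset_ne.mpr ⟨hv, fun h => hne (Subtype.ext h)⟩
      have := Finset.card_lt_card hsub
      exact ih v (by omega)

lemma forces_persist {P : Type} [PartialOrder P] {V : ℕ → Set P} (hV : IsVal V) :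
    ∀ (φ : Form) (w v : P), w ≤ v → forces V w φ → forces V v φ := by
  intro φ
  induction φ with
  | var p => intro w v hwv h; exact hV p w v hwv h
  | bot => intro _ _ _ h; exact h
  | and φ ψ ihφ ihψ => intro w v hwv h; exact ⟨ihφ w v hwv h.1, ihψ w v hwv h.2⟩
  | or φ ψ ihφ ihψ =>
    intro w v hwv h
    cases h with
    | inl h => exact Or.inl (ihφ w v hwv h)
    | inr h => exact Or.inr (ihψ w v hwv h)
  | imp φ ψ ihφ ihψ =>
    intro w v hwv h u hvu hu
    exact h u (le_trans hwv hvu) hu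

lemma bd_inj : Function.Injective bd := by
  intro a b h
  induction a generalizing b with
  | zero =>
    cases b with
    | zero => rfl
    | succ b => simp [bd] at h
  | succ a ih =>
    cases b with
    | zero => simp [bd] at h
    | succ b => simp only [bd, Form.or.injEq, Form.var.injEq] at h; omega

/-- The semantic consequence relation of Medvedev's logic is not
compact: `{bd_i → p_0 : i ≥ 1} ⊨_C p_0` over the class of all Medvedev frames,
but no finite subset entails `p_0`. -/
theorem stmt15 :
    (∀ n : ℕ, 1 ≤ n → ∀ w : Med n,
      Conseq {γ : Form | ∃ i : ℕ, 1 ≤ i ∧ γ = (bd i).imp (Form.var 0)} w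
        (Form.var 0)) ∧
    (∀ Γ' : Set Form,
      Γ' ⊆ {γ : Form | ∃ i : ℕ, 1 ≤ i ∧ γ = (bd i).imp (Form.var 0)} →
      Γ'.Finite →
      ¬ ∀ n : ℕ, 1 ≤ n → ∀ w : Med n, Conseq Γ' w (Form.var 0)) := by
  constructor
  · -- Part 1: Γ ⊨ p0 on every Medvedev frame
    intro n hn w V hV hΓ
    have hcard : w.1.card ≤ n := by
      have := Finset.card_le_card (Finset.subset_univ w.1)
      simpa using this
    have hbd := bd_forced_of_card_le V hV n w hcard
    have hγ := hΓ ((bd n).imp (Form.var 0)) ⟨n, hn, rfl⟩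
    exact hγ w le_rfl hbd
  · -- Part 2: no finite subset suffices
    intro Γ' hsub hfin hall
    have hSfin : {i : ℕ | ((bd i).imp (Form.var 0)) ∈ Γ'}.Finite := by
      have heq : {i : ℕ | ((bd i).imp (Form.var 0)) ∈ Γ'} =
          (fun i => (bd i).imp (Form.var 0)) ⁻¹' Γ' := rfl
      rw [heq]
      apply Set.Finite.preimage _ hfin
      intro a _ b _ hab
      exact bd_inj (by injection hab)
    obtain ⟨m, hm⟩ := hSfin.bddAbove
    set N := m + 1 with hN
    set V : ℕ → Set (Med N) := fun j => {w | w.1.card ≤ if j = 0 then m else j}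
      with hVdef
    have hV : IsVal V := by
      intro p x y hxy hx
      simp only [hVdef, Set.mem_setOf_eq] at hx ⊢
      have hsub' : y.1 ⊆ x.1 := hxy
      have := Finset.card_le_card hsub'
      omega
    have key : ∀ (k : ℕ) (w : Med N), forces V w (bd k) → w.1.card ≤ k := by
      intro k
      induction k with
      | zero => exact fun w h => h.elim
      | succ k ih =>
        intro w h
        cases h with
        | inl h =>
          have hw : w.1.card ≤ if (k + 1) = 0 then m else k + 1 := h
          simpa using hw
        | inr h =>
          by_contra hc
          push_neg at hc
          obtain ⟨t, hts, htc⟩ := Finset.exists_subset_card_eq (le_of_lt hc)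
          have htne : t.Nonempty := Finset.card_pos.mp (by omega)
          have hv : w ≤ (⟨t, htne⟩ : Med N) := hts
          have hmem : (⟨t, htne⟩ : Med N) ∈ V (k + 1) := by
            show t.card ≤ if (k + 1) = 0 then m else k + 1
            simp [htc]
          have := ih ⟨t, htne⟩ (h _ hv hmem)
          simp only at this
          omega
    have hroot : forces V (root N (by omega)) (Form.var 0) := by
      apply hall N (by omega) _ V hV
      intro γ hγ
      obtain ⟨i, hi1, rfl⟩ := hsub hγ
      have him : i ≤ m := hm hγ
      intro v _ hbdv
      have hcv : v.1.card ≤ i := key i v hbdv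
      show v.1.card ≤ if (0 : ℕ) = 0 then m else 0
      rw [if_pos rfl]
      omega
    have hrc : (root N (by omega) : Med N).1.card ≤ if (0 : ℕ) = 0 then m else 0 :=
      hroot
    rw [if_pos rfl] at hrc
    have : (root N (by omega) : Med N).1.card = N := by
      simp [root]
    omega
end

section
/- For every k ≥ 1, the formula bd_k is validated at the root of the k-Medvedev frame F_k, but bd_k is not validated at the root of the (k+1)-Medvedev frame F_{k+1}. -/
lemma forces_bd_of_card_le {n k : ℕ} (V : ℕ → Set (Med n)) :
    ∀ w : Med n, w.1.card ≤ k → forces V w (bd k) := by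
  induction k with
  | zero =>
    intro w hw
    exact absurd (Finset.card_pos.mpr w.2) (by omega)
  | succ k ih =>
    intro w hw
    by_cases h : w ∈ V (k + 1)
    · exact Or.inl h
    · refine Or.inr ?_
      intro v hv hvp
      have hne : v ≠ w := fun e => h (e ▸ hvp)
      have hsub : v.1 ⊂ w.1 :=
        ⟨hv, fun hh => hne (Subtype.ext (Finset.Subset.antisymm hv hh))⟩
      exact ih v (by have := Finset.card_lt_card hsub; omega)

lemma not_forces_bd {n : ℕ} :
    ∀ (j : ℕ) (X : Med n), j + 1 ≤ X.1.card →
      ¬ forces (fun j => {Y : Med n | Y.1.card ≤ j}) X (bd j) := by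
  intro j
  induction j with
  | zero => intro X _ h; exact h
  | succ j ih =>
    intro X hX h
    rcases h with h | h
    · have : X.1.card ≤ j + 1 := h
      omega
    · obtain ⟨Y, hYX, hY⟩ := Finset.exists_subset_card_eq (show j + 1 ≤ X.1.card by omega)
      have hYne : Y.Nonempty := Finset.card_pos.mp (by omega)
      have := h ⟨Y, hYne⟩ hYX (show Y.card ≤ j + 1 by omega)
      exact ih ⟨Y, hYne⟩ (by simp only []; omega) this

/-- `bd_k` is validated at the root of F_k but not at the root of
F_{k+1}. -/
theorem stmt16 (k : ℕ) (hk : 1 ≤ k) :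
    valid (root k hk) (bd k) ∧ ¬ valid (root (k + 1) (by omega)) (bd k) := by
  constructor
  · intro V hV
    apply forces_bd_of_card_le
    simp [root]
  · intro hval
    have hV : IsVal (fun j => {Y : Med (k + 1) | Y.1.card ≤ j}) := by
      intro p x y hxy hx
      have : y.1.card ≤ x.1.card := Finset.card_le_card hxy
      simp only [Set.mem_setOf_eq] at hx ⊢
      omega
    have := hval _ hV
    refine not_forces_bd k (root (k + 1) (by omega)) ?_ this
    simp [root]
end

section
/- Let n ≥ 1, let α_0,…,α_{n−1} be formulas and V_0 an intuitionistic valuation on the n-Medvedev frame F_n such that for all 0 ≤ i, j < n: (F_n,V_0), {j} ⊨ α_i if and only if i = j. For every nonempty I ⊆ {0,…,n−1} define α_I = ¬¬(⋁_{i∈I} α_i). Then for all nonempty I, J ⊆ {0,…,n−1}: (F_n,V_0), J ⊨ α_I if and only if I ⊇ J. -/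
lemma forces_foldr_or {P : Type} [PartialOrder P] (V : ℕ → Set P) (w : P)
    {n : ℕ} (F : Fin n → Form) (l : List (Fin n)) :
    forces V w (l.foldr (fun i acc => (F i).or acc) .bot) ↔ ∃ i ∈ l, forces V w (F i) := by
  induction l with
  | nil => simp [forces]
  | cons a t ih => simp [forces, ih]

lemma forces_disjOver {P : Type} [PartialOrder P] (V : ℕ → Set P) (w : P)
    {n : ℕ} (I : Finset (Fin n)) (F : Fin n → Form) :
    forces V w (disjOver I F) ↔ ∃ i ∈ I, forces V w (F i) := by
  rw [disjOver, forces_foldr_or]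
  simp

/-- If each `α_i` is forced exactly at the singleton `{i}` among
singletons, then `α_I = ¬¬⋁_{i∈I} α_i` is forced at `J` iff `I ⊇ J`. -/
theorem stmt18 (n : ℕ) (hn : 1 ≤ n) (α : Fin n → Form)
    (V0 : ℕ → Set (Med n)) (hV0 : IsVal V0)
    (hα : ∀ i j : Fin n,
      forces V0 (⟨{j}, Finset.singleton_nonempty j⟩ : Med n) (α i) ↔ i = j) :
    ∀ (I J : Finset (Fin n)) (hI : I.Nonempty) (hJ : J.Nonempty),
      forces V0 (⟨J, hJ⟩ : Med n) (alphaI I α) ↔ J ⊆ I := by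
  intro I J hI hJ
  constructor
  · intro h j hjJ
    by_contra hjI
    have hle : @LE.le (Med n) Preorder.toLE ⟨J, hJ⟩ ⟨{j}, Finset.singleton_nonempty j⟩ :=
      Finset.singleton_subset_iff.mpr hjJ
    refine h ⟨{j}, Finset.singleton_nonempty j⟩ hle ?_
    intro u hu hforces
    have hu' : u.1 = {j} := by
      rcases Finset.subset_singleton_iff.mp hu with h0 | h1
      · exact absurd h0 (Finset.nonempty_iff_ne_empty.mp u.2)
      · exact h1
    have hueq : u = ⟨{j}, Finset.singleton_nonempty j⟩ := Subtype.ext hu'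
    rw [hueq] at hforces
    rcases (forces_disjOver V0 _ I α).mp hforces with ⟨i, hiI, hfi⟩
    have := (hα i j).mp hfi
    exact hjI (this ▸ hiI)
  · intro hJI K hK hKneg
    obtain ⟨j, hjK⟩ := K.2
    have hle : @LE.le (Med n) Preorder.toLE K ⟨{j}, Finset.singleton_nonempty j⟩ :=
      Finset.singleton_subset_iff.mpr hjK
    refine hKneg ⟨{j}, Finset.singleton_nonempty j⟩ hle ?_
    refine (forces_disjOver V0 _ I α).mpr ⟨j, hJI (hK hjK), ?_⟩
    exact (hα j j).mpr rfl
end
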